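/- arXiv:1310.7738 — 2 statements merged into one kernel-verified Lean document; each statement's English description precedes it below -/
import Mathlib

section
/- Let V be an arbitrary k-vector space and f an endomorphism of V whose annihilator polynomial is a_f(x) = p(x)^n with p(x) monic irreducible of degree d, and let K = k[x]/(p(x)). Fix 1 ≤ i ≤ n and set W_i = Ker p(f)^{i-1} + p(f)(Ker p(f)^{i+1}), with π_i : Ker p(f)^i → Ker p(f)^i / W_i the natural projection. If {v̄_h}_{h∈S} is a (possibly infinite) basis of Ker p(f)^i / W_i as a K-vector space and {v_h}_{h∈S} are vectors of Ker p(f)^i with π_i(v_h) = v̄_h for all h ∈ S, then the family ⋃_{h∈S} {v_h, f(v_h), f²(v_h), …, f^{d-1}(v_h)} is linearly independent over k in Ker p(f)^i. -/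
open Polynomial Module

universe u v w

section Preamble

variable {k : Type u} [Field k] {V : Type v} [AddCommGroup V] [Module k V]

/-- `Ker p(f)^i`, as a `k[X]`-submodule of `V` viewed as a `k[X]`-module via `f`
(i.e. of the type synonym `Module.AEval' f`, on which `q(x) • v = q(f)(v)`). -/
noncomputable def kerP (f : Module.End k V) (p : k[X]) (i : ℕ) :
    Submodule k[X] (Module.AEval' f) :=
  Submodule.torsionBy k[X] (Module.AEval' f) (p ^ i)

/-- `W_i = Ker p(f)^{i-1} + p(f)(Ker p(f)^{i+1})`, as a `k[X]`-submodule. -/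
noncomputable def wSub (f : Module.End k V) (p : k[X]) (i : ℕ) :
    Submodule k[X] (Module.AEval' f) :=
  kerP f p (i - 1) ⊔ (kerP f p (i + 1)).map (LinearMap.lsmul k[X] (Module.AEval' f) p)

/-- The quotient `Ker p(f)^i / (Ker p(f)^{i-1} + p(f)(Ker p(f)^{i+1}))`, as a `k[X]`-module. -/
abbrev Qmod (f : Module.End k V) (p : k[X]) (i : ℕ) : Type v :=
  kerP f p i ⧸ (wSub f p i).comap (kerP f p i).subtype

theorem qmod_isTorsionBy (f : Module.End k V) (p : k[X]) (i : ℕ) :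
    Module.IsTorsionBy k[X] (Qmod f p i) p := by
  intro x
  obtain ⟨⟨v, hv⟩, rfl⟩ := Submodule.Quotient.mk_surjective _ x
  rw [← Submodule.Quotient.mk_smul, Submodule.Quotient.mk_eq_zero]
  refine Submodule.mem_comap.mpr (Submodule.mem_sup_right ?_)
  refine Submodule.mem_map.mpr ⟨v, ?_, by simp⟩
  rw [kerP, Submodule.mem_torsionBy_iff] at hv ⊢
  rw [pow_succ', mul_smul, hv, smul_zero]

/-- The `K = k[x]/(p(x))`-vector space structure on
`Ker p(f)^i / (Ker p(f)^{i-1} + p(f)(Ker p(f)^{i+1}))`, induced by the `k[x]`-module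
structure `q(x) • v = q(f)(v)`. -/
noncomputable instance qmodModule (f : Module.End k V) (p : k[X]) (i : ℕ) :
    Module (k[X] ⧸ Ideal.span {p}) (Qmod f p i) :=
  (qmod_isTorsionBy f p i).module

/-- The invariant `ν_i(V, p(f))`: the dimension of
`Ker p(f)^i / (Ker p(f)^{i-1} + p(f)(Ker p(f)^{i+1}))` as a vector space over
`K = k[x]/(p(x))`. -/
noncomputable def nu (f : Module.End k V) (p : k[X]) (i : ℕ) : Cardinal.{v} :=
  Module.rank (k[X] ⧸ Ideal.span {p}) (Qmod f p i)

end Preamble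

/-!
Write a `k`-linear combination of the `f^m v_h` (`m < d`) as `∑_h q_h(f) v_h` with
`deg q_h < d`. Its projection to `Ker p(f)^i / W_i` is `∑_h (q_h mod p) • v̄_h`. Since the
classes of `1, x, …, x^{d-1}` form a `k`-basis of `K` and the `v̄_h` are `K`-independent, the
products `x^m • v̄_h` are `k`-independent, hence so are their lifts `f^m v_h`.
-/

section

variable {k : Type u} [Field k]

theorem linearIndependent_mk_X_pow (p : k[X]) :
    LinearIndependent k fun m : Fin p.natDegree =>
      Ideal.Quotient.mk (Ideal.span {p}) X ^ (m : ℕ) := by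
  by_cases hp : p = 0
  · subst hp
    have : IsEmpty (Fin (0 : k[X]).natDegree) := by simp only [natDegree_zero]; infer_instance
    exact linearIndependent_empty_type
  have h := (AdjoinRoot.powerBasis hp).basis.linearIndependent
  simp only [PowerBasis.coe_basis, AdjoinRoot.powerBasis_gen] at h
  exact h

variable {M Q : Type*} [AddCommGroup M] [Module k[X] M] [Module k M] [IsScalarTower k k[X] M]
  [AddCommGroup Q] [Module k[X] Q] [Module k Q] [IsScalarTower k k[X] Q]
  {p : k[X]} [Module (k[X] ⧸ Ideal.span {p}) Q] [IsScalarTower k[X] (k[X] ⧸ Ideal.span {p}) Q]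

theorem linearIndependent_X_pow_smul_of_comp (π : M →ₗ[k[X]] Q) {S : Type*} {w : S → M}
    (hw : LinearIndependent (k[X] ⧸ Ideal.span {p}) (π ∘ w)) :
    LinearIndependent k fun hm : S × Fin p.natDegree => (X ^ (hm.2 : ℕ) : k[X]) • w hm.1 := by
  have := IsScalarTower.to₁₃₄ k k[X] (k[X] ⧸ Ideal.span {p}) Q
  have hprod := (linearIndependent_smul (linearIndependent_mk_X_pow p) hw).comp Prod.swap
    Prod.swap_injective
  refine LinearIndependent.of_comp (π.restrictScalars k) ?_
  convert hprod using 1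
  ext hm
  simp [← map_pow, ← Ideal.Quotient.algebraMap_eq, algebraMap_smul]

end

instance qmodIsScalarTower {k : Type u} [Field k] {V : Type v} [AddCommGroup V] [Module k V]
    (f : Module.End k V) (p : k[X]) (i : ℕ) :
    IsScalarTower k[X] (k[X] ⧸ Ideal.span {p}) (Qmod f p i) :=
  Module.IsTorsionBySet.isScalarTower
    ((Module.isTorsionBySet_span_singleton_iff p).mpr (qmod_isTorsionBy f p i))

theorem stmt_2_general {k : Type u} [Field k] {V : Type v} [AddCommGroup V] [Module k V]
    (f : Module.End k V) (p : k[X]) (d : ℕ)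
    (hdeg : p.natDegree = d)
    (i : ℕ)
    (S : Type w) (v : S → V)
    (hv : ∀ h, Module.AEval'.of f (v h) ∈ kerP f p i)
    (b : Basis S (k[X] ⧸ Ideal.span {p}) (Qmod f p i))
    (hb : ∀ h, b h = Submodule.Quotient.mk ⟨Module.AEval'.of f (v h), hv h⟩) :
    LinearIndependent k fun hm : S × Fin d => (f ^ (hm.2 : ℕ)) (v hm.1) := by
  subst hdeg
  set w : S → kerP f p i := fun h => ⟨Module.AEval'.of f (v h), hv h⟩
  have hbw : Submodule.mkQ _ ∘ w = b := funext fun h => (hb h).symm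
  have hlift := linearIndependent_X_pow_smul_of_comp _ (hbw ▸ b.linearIndependent)
  have hinj : Function.Injective ((Module.AEval'.of f).symm.toLinearMap ∘ₗ
      (kerP f p i).subtype.restrictScalars k) :=
    (Module.AEval'.of f).symm.injective.comp Subtype.val_injective
  simpa [w, Function.comp_def] using hlift.map' _ (LinearMap.ker_eq_bot.mpr hinj)

/-- Let `V` be an arbitrary `k`-vector space and `f` an endomorphism of `V`
whose annihilator polynomial is `a_f(x) = p(x)^n` with `p(x)` monic irreducible of degree `d`,
and let `K = k[x]/(p(x))`.  Fix `1 ≤ i ≤ n` and set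
`W_i = Ker p(f)^{i-1} + p(f)(Ker p(f)^{i+1})`, with `π_i` the natural projection onto
`Ker p(f)^i / W_i`.  If `{v̄_h}_{h ∈ S}` is a (possibly infinite) `K`-basis of
`Ker p(f)^i / W_i` and `{v_h}_{h ∈ S}` are vectors of `Ker p(f)^i` with `π_i(v_h) = v̄_h` for
all `h ∈ S`, then the family `⋃_{h ∈ S} {v_h, f v_h, …, f^{d-1} v_h}` is linearly independent
over `k`. -/
theorem stmt_2 {k : Type u} [Field k] {V : Type v} [AddCommGroup V] [Module k V]
    (f : Module.End k V) (p : k[X]) (n d : ℕ)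
    (hmonic : p.Monic) (hirr : Irreducible p) (hdeg : p.natDegree = d)
    (hmin : minpoly k f = p ^ n)
    (i : ℕ) (hi1 : 1 ≤ i) (hin : i ≤ n)
    (S : Type w) (v : S → V)
    (hv : ∀ h, Module.AEval'.of f (v h) ∈ kerP f p i)
    (b : Basis S (k[X] ⧸ Ideal.span {p}) (Qmod f p i))
    (hb : ∀ h, b h = Submodule.Quotient.mk ⟨Module.AEval'.of f (v h), hv h⟩) :
    LinearIndependent k fun hm : S × Fin d => (f ^ (hm.2 : ℕ)) (v hm.1) :=
  stmt_2_general f p d hdeg i S v hv b hb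
end

section
/- Let V be an arbitrary k-vector space and f an endomorphism of V whose annihilator polynomial is a_f(x) = p(x)^n with p(x) monic irreducible of degree d, and let K = k[x]/(p(x)). Fix 1 ≤ i ≤ n and set W_i = Ker p(f)^{i-1} + p(f)(Ker p(f)^{i+1}). If {v_h}_{h∈S} ⊆ Ker p(f)^i are vectors whose images in Ker p(f)^i / W_i form a K-basis, and H_i is the k-subspace of Ker p(f)^i generated by the family ⋃_{h∈S} {v_h, f(v_h), f²(v_h), …, f^{d-1}(v_h)}, then H_i is a complementary subspace of W_i in Ker p(f)^i, i.e. Ker p(f)^i = W_i ⊕ H_i. -/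
open Polynomial Module

universe u v w

/-!
Division with remainder by the monic `p` identifies `K = k[x]/(p)` with the `k`-space of
polynomials of degree `< d`. Through this identification the `K`-basis `b` turns
`c ↦ ∑ₕ c_h(f) v_h`, defined on finitely supported families of such polynomials, into a
`k`-linear map whose composite with the projection `Ker p(f)^i → Ker p(f)^i / W_i` is bijective.
Its image, which is `H_i`, is therefore a complement of the kernel `W_i` of that projection.
-/

theorem LinearMap.isCompl_ker_range_of_bijective_comp {R M N Q : Type*} [Ring R]
    [AddCommMonoid M] [Module R M] [AddCommGroup N] [Module R N] [AddCommGroup Q] [Module R Q]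
    {π : N →ₗ[R] Q} {ψ : M →ₗ[R] N} (h : Function.Bijective (π ∘ₗ ψ)) :
    IsCompl (LinearMap.ker π) (LinearMap.range ψ) := by
  constructor
  · rw [Submodule.disjoint_def]
    rintro _ hx ⟨c, rfl⟩
    have hc : (π ∘ₗ ψ) c = (π ∘ₗ ψ) 0 := by simpa using hx
    rw [h.1 hc, map_zero]
  · rw [codisjoint_iff, eq_top_iff]
    intro x _
    obtain ⟨c, hc⟩ := h.2 (π x)
    have hxc : x - ψ c ∈ LinearMap.ker π := by simp_all
    simpa using Submodule.add_mem_sup hxc (LinearMap.mem_range_self ψ c)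

theorem Submodule.disjoint_map_and_sup_map_eq_range {R M N : Type*} [Ring R]
    [AddCommGroup M] [Module R M] [AddCommGroup N] [Module R N] {ι : M →ₗ[R] N}
    (hι : Function.Injective ι) {A B : Submodule R M} (h : IsCompl A B) :
    Disjoint (A.map ι) (B.map ι) ∧ A.map ι ⊔ B.map ι = LinearMap.range ι := by
  refine ⟨Submodule.disjoint_map hι h.disjoint, ?_⟩
  rw [← Submodule.map_sup, h.sup_eq_top, Submodule.map_top]

namespace Polynomial

variable {R : Type*} [CommRing R] {S : Type*}
variable {M : Type*} [AddCommGroup M] [Module R[X] M] [Module R M] [IsScalarTower R R[X] M]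

theorem Monic.bijective_quotientMk_degreeLT [Nontrivial R] {p : R[X]} (hp : p.Monic) :
    Function.Bijective fun r : degreeLT R p.natDegree =>
      Ideal.Quotient.mk (Ideal.span {p}) (r : R[X]) := by
  have hdeg : p.degree = p.natDegree := degree_eq_natDegree hp.ne_zero
  have hmod (r : degreeLT R p.natDegree) : (r : R[X]) %ₘ p = r :=
    (modByMonic_eq_self_iff hp).2 ((mem_degreeLT.1 r.2).trans_eq hdeg.symm)
  constructor
  · intro r s hrs
    have hdvd : p ∣ ((r - s : degreeLT R p.natDegree) : R[X]) :=
      Ideal.mem_span_singleton.1 (Ideal.Quotient.eq.1 hrs)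
    rw [← modByMonic_eq_zero_iff_dvd hp, hmod] at hdvd
    exact sub_eq_zero.1 (Submodule.coe_eq_zero.1 hdvd)
  · intro x
    obtain ⟨q, rfl⟩ := Ideal.Quotient.mk_surjective x
    refine ⟨⟨q %ₘ p, mem_degreeLT.2 ((degree_modByMonic_lt q hp).trans_eq hdeg)⟩, ?_⟩
    refine Ideal.Quotient.eq.2 (Ideal.mem_span_singleton.2 ⟨-(q /ₘ p), ?_⟩)
    change q %ₘ p - q = _
    rw [modByMonic_eq_sub_mul_div q p]
    ring

variable (R) in
noncomputable def degreeLTCombination (n : ℕ) (w : S → M) : (S →₀ degreeLT R n) →ₗ[R] M :=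
  (Finsupp.linearCombination R[X] w).restrictScalars R ∘ₗ
    Finsupp.mapRange.linearMap (degreeLT R n).subtype

theorem degreeLTCombination_apply (n : ℕ) (w : S → M) (c : S →₀ degreeLT R n) :
    degreeLTCombination R n w c = c.sum fun h r => (r : R[X]) • w h := by
  simp [degreeLTCombination, Finsupp.linearCombination_apply, Finsupp.sum_mapRange_index]

theorem range_degreeLTCombination (n : ℕ) (w : S → M) :
    LinearMap.range (degreeLTCombination R n w) =
      Submodule.span R (Set.range fun hj : S × Fin n => (X ^ (hj.2 : ℕ) : R[X]) • w hj.1) := by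
  rw [LinearMap.range_eq_map, ← (Finsupp.basis fun _ : S => degreeLT.basis R n).span_eq,
    Submodule.map_span, ← Set.range_comp,
    ← (Equiv.sigmaEquivProd S (Fin n)).symm.surjective.range_comp]
  congr 2
  ext ⟨h, j⟩
  simp [degreeLTCombination_apply]

theorem comp_degreeLTCombination {M' : Type*} [AddCommGroup M'] [Module R[X] M'] [Module R M']
    [IsScalarTower R R[X] M'] (g : M →ₗ[R[X]] M') (n : ℕ) (w : S → M) :
    g.restrictScalars R ∘ₗ degreeLTCombination R n w = degreeLTCombination R n (g ∘ w) := by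
  ext h r
  simp [degreeLTCombination_apply]

theorem Monic.bijective_degreeLTCombination_basis [Nontrivial R] {p : R[X]} (hp : p.Monic)
    [Module (R[X] ⧸ Ideal.span {p}) M] [IsScalarTower R[X] (R[X] ⧸ Ideal.span {p}) M]
    (b : Basis S (R[X] ⧸ Ideal.span {p}) M) :
    Function.Bijective (degreeLTCombination R p.natDegree b) := by
  set e := fun r : degreeLT R p.natDegree => Ideal.Quotient.mk (Ideal.span {p}) (r : R[X])
  have he₀ : e 0 = 0 := by simp [e]
  have he : ⇑(degreeLTCombination R p.natDegree b) = b.repr.symm ∘ Finsupp.mapRange e he₀ := by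
    ext c
    rw [degreeLTCombination_apply, Function.comp_apply, Basis.repr_symm_apply,
      Finsupp.linearCombination_apply,
      Finsupp.sum_mapRange_index fun h => zero_smul (R[X] ⧸ Ideal.span {p}) (b h)]
    refine Finsupp.sum_congr fun h _ => ?_
    rw [← algebraMap_smul (R[X] ⧸ Ideal.span {p}) (c h : R[X]) (b h)]
    rfl
  have hbij := hp.bijective_quotientMk_degreeLT
  rw [he]
  exact b.repr.symm.bijective.comp ⟨Finsupp.mapRange_injective e he₀ hbij.1,
    Finsupp.mapRange_surjective e he₀ hbij.2⟩

theorem Monic.isCompl_restrictScalars_range_degreeLTCombination [Nontrivial R] {p : R[X]}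
    (hp : p.Monic)
    {W : Submodule R[X] M} [Module (R[X] ⧸ Ideal.span {p}) (M ⧸ W)]
    [IsScalarTower R[X] (R[X] ⧸ Ideal.span {p}) (M ⧸ W)]
    (b : Basis S (R[X] ⧸ Ideal.span {p}) (M ⧸ W)) {w : S → M} (hw : ∀ h, W.mkQ (w h) = b h) :
    IsCompl (W.restrictScalars R) (LinearMap.range (degreeLTCombination R p.natDegree w)) := by
  have hbij := hp.bijective_degreeLTCombination_basis b
  have hb : ⇑b = W.mkQ ∘ w := _root_.funext fun h => (hw h).symm
  rw [hb, ← comp_degreeLTCombination] at hbij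
  simpa using LinearMap.isCompl_ker_range_of_bijective_comp hbij

end Polynomial

section KerP

variable {k : Type u} [Field k] {V : Type v} [AddCommGroup V] [Module k V]
variable (f : Module.End k V) (p : k[X])

theorem mem_kerP_iff {j : ℕ} {w : V} :
    Module.AEval'.of f w ∈ kerP f p j ↔ w ∈ LinearMap.ker (aeval f p ^ j) := by
  rw [kerP, Submodule.mem_torsionBy_iff, LinearMap.mem_ker, ← Module.AEval.of_aeval_smul,
    map_pow, LinearEquiv.map_eq_zero_iff]
  rfl

theorem mem_wSub_iff {i : ℕ} {w : V} :
    Module.AEval'.of f w ∈ wSub f p i ↔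
      w ∈ LinearMap.ker (aeval f p ^ (i - 1)) ⊔
        (LinearMap.ker (aeval f p ^ (i + 1))).map (aeval f p) := by
  rw [wSub, Submodule.mem_sup, Submodule.mem_sup]
  constructor
  · rintro ⟨y, hy, _, ⟨z, hz, rfl⟩, hyz⟩
    refine ⟨(Module.AEval'.of f).symm y, (mem_kerP_iff f p).1 (by simpa using hy),
      aeval f p ((Module.AEval'.of f).symm z), ⟨_, (mem_kerP_iff f p).1 (by simpa using hz), rfl⟩,
      (Module.AEval'.of f).injective ?_⟩
    rw [← hyz]
    rfl
  · rintro ⟨y, hy, _, ⟨z, hz, rfl⟩, rfl⟩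
    exact ⟨_, (mem_kerP_iff f p).2 hy, _, ⟨_, (mem_kerP_iff f p).2 hz, rfl⟩, rfl⟩

theorem wSub_le_kerP (i : ℕ) : wSub f p i ≤ kerP f p i := by
  refine sup_le (Submodule.torsionBy_le_torsionBy_of_dvd _ _ (pow_dvd_pow p (Nat.sub_le i 1))) ?_
  rintro _ ⟨x, hx, rfl⟩
  simp only [SetLike.mem_coe, kerP, Submodule.mem_torsionBy_iff] at hx ⊢
  simpa [← mul_smul, ← pow_succ] using hx

end KerP

section KerPSubtype

variable {k : Type u} [Field k] {V : Type v} [AddCommGroup V] [Module k V]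
variable (f : Module.End k V) (p : k[X]) (i : ℕ)

instance : IsScalarTower k[X] (k[X] ⧸ Ideal.span {p}) (Qmod f p i) :=
  ((Module.isTorsionBySet_span_singleton_iff p).2 (qmod_isTorsionBy f p i)).isScalarTower

noncomputable def kerPSubtype : kerP f p i →ₗ[k] V :=
  (Module.AEval'.of f).symm.toLinearMap ∘ₗ (kerP f p i).subtype.restrictScalars k

theorem injective_kerPSubtype : Function.Injective (kerPSubtype f p i) :=
  (Module.AEval'.of f).symm.injective.comp Subtype.val_injective

theorem range_kerPSubtype :
    LinearMap.range (kerPSubtype f p i) = LinearMap.ker (aeval f p ^ i) := by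
  ext w
  refine ⟨?_, fun hw => ⟨⟨_, (mem_kerP_iff f p).2 hw⟩, rfl⟩⟩
  rintro ⟨⟨x, hx⟩, rfl⟩
  exact (mem_kerP_iff f p).1 hx

theorem map_kerPSubtype_wSub :
    (((wSub f p i).comap (kerP f p i).subtype).restrictScalars k).map (kerPSubtype f p i) =
      LinearMap.ker (aeval f p ^ (i - 1)) ⊔
        (LinearMap.ker (aeval f p ^ (i + 1))).map (aeval f p) := by
  ext w
  rw [← mem_wSub_iff]
  refine ⟨?_, fun hw => ⟨⟨_, wSub_le_kerP f p i hw⟩, hw, rfl⟩⟩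
  rintro ⟨⟨x, hx⟩, hxW, rfl⟩
  exact hxW

theorem map_kerPSubtype_range_degreeLTCombination {S : Type*} {v : S → V} (d : ℕ)
    (hv : ∀ h, Module.AEval'.of f (v h) ∈ kerP f p i) :
    (LinearMap.range (degreeLTCombination k d fun h => ⟨_, hv h⟩)).map (kerPSubtype f p i) =
      Submodule.span k (Set.range fun hm : S × Fin d => (f ^ (hm.2 : ℕ)) (v hm.1)) := by
  rw [range_degreeLTCombination, Submodule.map_span, ← Set.range_comp]
  congr 2
  ext ⟨h, j⟩
  simp [kerPSubtype, Module.AEval'.X_pow_smul_of]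

end KerPSubtype

theorem stmt_3_general {k : Type u} [Field k] {V : Type v} [AddCommGroup V] [Module k V]
    (f : Module.End k V) (p : k[X]) (d : ℕ)
    (hmonic : p.Monic) (hdeg : p.natDegree = d)
    (i : ℕ)
    (S : Type w) (v : S → V)
    (hv : ∀ h, Module.AEval'.of f (v h) ∈ kerP f p i)
    (b : Basis S (k[X] ⧸ Ideal.span {p}) (Qmod f p i))
    (hb : ∀ h, b h = Submodule.Quotient.mk ⟨Module.AEval'.of f (v h), hv h⟩)
    (H : Submodule k V)
    (hH : H = Submodule.span k
      (Set.range fun hm : S × Fin d => (f ^ (hm.2 : ℕ)) (v hm.1))) :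
    Disjoint (LinearMap.ker (aeval f p ^ (i - 1)) ⊔
        (LinearMap.ker (aeval f p ^ (i + 1))).map (aeval f p)) H ∧
      (LinearMap.ker (aeval f p ^ (i - 1)) ⊔
          (LinearMap.ker (aeval f p ^ (i + 1))).map (aeval f p)) ⊔ H
        = LinearMap.ker (aeval f p ^ i) := by
  subst hdeg hH
  have hcompl := hmonic.isCompl_restrictScalars_range_degreeLTCombination b
    (w := fun h => ⟨_, hv h⟩) fun h => (hb h).symm
  have := Submodule.disjoint_map_and_sup_map_eq_range (injective_kerPSubtype f p i) hcompl
  rwa [map_kerPSubtype_wSub, map_kerPSubtype_range_degreeLTCombination, range_kerPSubtype] at this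

/-- Let `V` be an arbitrary `k`-vector space and `f` an endomorphism of `V`
whose annihilator polynomial is `a_f(x) = p(x)^n` with `p(x)` monic irreducible of degree `d`,
and let `K = k[x]/(p(x))`.  Fix `1 ≤ i ≤ n` and set
`W_i = Ker p(f)^{i-1} + p(f)(Ker p(f)^{i+1})`.  If `{v_h}_{h ∈ S} ⊆ Ker p(f)^i` are vectors
whose images in `Ker p(f)^i / W_i` form a `K`-basis, and `H_i` is the `k`-subspace generated
by the family `⋃_{h ∈ S} {v_h, f v_h, …, f^{d-1} v_h}`, then `H_i` is a complementary subspace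
of `W_i` in `Ker p(f)^i`, i.e. `Ker p(f)^i = W_i ⊕ H_i`. -/
theorem stmt_3 {k : Type u} [Field k] {V : Type v} [AddCommGroup V] [Module k V]
    (f : Module.End k V) (p : k[X]) (n d : ℕ)
    (hmonic : p.Monic) (hirr : Irreducible p) (hdeg : p.natDegree = d)
    (hmin : minpoly k f = p ^ n)
    (i : ℕ) (hi1 : 1 ≤ i) (hin : i ≤ n)
    (S : Type w) (v : S → V)
    (hv : ∀ h, Module.AEval'.of f (v h) ∈ kerP f p i)
    (b : Basis S (k[X] ⧸ Ideal.span {p}) (Qmod f p i))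
    (hb : ∀ h, b h = Submodule.Quotient.mk ⟨Module.AEval'.of f (v h), hv h⟩)
    (H : Submodule k V)
    (hH : H = Submodule.span k
      (Set.range fun hm : S × Fin d => (f ^ (hm.2 : ℕ)) (v hm.1))) :
    Disjoint (LinearMap.ker (aeval f p ^ (i - 1)) ⊔
        (LinearMap.ker (aeval f p ^ (i + 1))).map (aeval f p)) H ∧
      (LinearMap.ker (aeval f p ^ (i - 1)) ⊔
          (LinearMap.ker (aeval f p ^ (i + 1))).map (aeval f p)) ⊔ H
        = LinearMap.ker (aeval f p ^ i) :=
  stmt_3_general f p d hmonic hdeg i S v hv b hb H hH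
end
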